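/- arXiv:2003.00589 — 3 statements merged into one kernel-verified Lean document; each statement's English description precedes it below -/
import Mathlib

section
/- Define ℓ_n recursively by ℓ_0 = 3 and ℓ_{n+1} = 1 + Σ_{j=0}^{n} (-1)^j * binom(ℓ_{n-j}, j+2). Then for all n ≥ 1, ℓ_{n+1} = Σ_{j=1}^{n+1} (-1)^(j+1) * binom(ℓ_{n-j+1} + 1, j+1). -/
/-!
Pascal's rule `binom(ℓ + 1, j + 2) = binom(ℓ, j + 2) + binom(ℓ, j + 1)` splits the right-hand side
into `ℓ_{n+1} - 1` plus `∑_{i ≤ n} (-1)^i binom(ℓ_{n-i}, i + 1)`; the `i = 0` term of the latter is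
`ℓ_n` and the remaining terms are `-(ℓ_n - 1)` by the recursion at `n - 1`, so it equals `1`.

This needs `ℓ_m ≥ 0`, so that `toNat` does nothing, and that is the real content. We show
`ℓ_m² ≤ 4 ℓ_{m+1}`. This growth makes the terms `binom(ℓ_{m-j}, j + 2)` of the recursion decrease
in `j`, so the alternating sum is at least `binom(ℓ_m, 2) - binom(ℓ_{m-1}, 3)`, which is again at
least `ℓ_m² / 4` as soon as `ℓ_m ≥ 36`.
-/

open Finset

theorem sum_range_add_two_neg_one_pow_mul {R : Type*} [Ring R] (f : ℕ → R) (n : ℕ) :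
    ∑ i ∈ range (n + 2), (-1) ^ i * f i = f 0 - f 1 + ∑ i ∈ range n, (-1) ^ i * f (i + 2) := by
  rw [sum_range_succ', sum_range_succ']
  simp only [pow_succ, mul_neg_one, neg_neg, pow_zero, zero_add, neg_mul, one_mul]
  abel

section AlternatingSum

variable {R : Type*} [Ring R] [PartialOrder R] [IsOrderedRing R] {f : ℕ → R}

theorem alternating_sum_nonneg {n : ℕ} (hf : ∀ i, i + 1 < n → f (i + 1) ≤ f i)
    (hf0 : ∀ i < n, 0 ≤ f i) : 0 ≤ ∑ i ∈ range n, (-1) ^ i * f i := by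
  induction n using Nat.strong_induction_on generalizing f with
  | _ n ih =>
    match n with
    | 0 => simp
    | 1 => simpa using hf0 0 one_pos
    | n + 2 =>
      rw [sum_range_add_two_neg_one_pow_mul]
      exact add_nonneg (sub_nonneg.2 (hf 0 (by omega)))
        (ih n (by omega) (fun i _ ↦ hf (i + 2) (by omega)) (fun i _ ↦ hf0 (i + 2) (by omega)))

theorem sub_le_alternating_sum {n : ℕ} (hf : ∀ i, i + 1 < n + 2 → f (i + 1) ≤ f i)
    (hf0 : ∀ i < n + 2, 0 ≤ f i) : f 0 - f 1 ≤ ∑ i ∈ range (n + 2), (-1) ^ i * f i := by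
  rw [sum_range_add_two_neg_one_pow_mul]
  exact le_add_of_nonneg_right
    (alternating_sum_nonneg (fun i _ ↦ hf (i + 2) (by omega)) (fun i _ ↦ hf0 (i + 2) (by omega)))

end AlternatingSum

namespace Nat

theorem le_succ_of_sq_le_four_mul {a b : ℕ} (h : b ^ 2 ≤ 4 * a) : b ≤ a + 1 := by
  nlinarith

theorem choose_three_le_choose_two_of_sq_le {a b : ℕ} (h : b ^ 2 ≤ 4 * a) :
    b.choose 3 ≤ a.choose 2 := by
  obtain hb | ⟨d, rfl⟩ : b < 2 ∨ ∃ d, b = d + 2 := by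
    rcases lt_or_ge b 2 with hb | hb
    · exact .inl hb
    · exact .inr ⟨b - 2, by omega⟩
  · rw [choose_eq_zero_of_lt (by omega)]
    exact Nat.zero_le _
  obtain ⟨e, rfl⟩ : ∃ e, a = e + 1 :=
    Nat.exists_eq_add_one.2 (Nat.pos_of_ne_zero (by rintro rfl; simp at h))
  have hb3 : (d + 2).choose 3 * 6 = (d + 2) * (d + 1) * d := by
    have h3 := choose_succ_right_eq (d + 2) 2
    have h2 := choose_succ_right_eq (d + 2) 1
    norm_num at h3 h2
    calc (d + 2).choose 3 * 6 = (d + 2).choose 3 * 3 * 2 := by ring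
      _ = (d + 2).choose 2 * 2 * d := by rw [h3]; ring
      _ = _ := by rw [h2]
  have ha2 : (e + 1).choose 2 * 2 = (e + 1) * e := by
    simpa using choose_succ_right_eq (e + 1) 1
  have hde : d * (d + 4) ≤ 4 * e := by nlinarith
  have hcubic : (d + 2) * (d + 1) * d * 16 ≤ 3 * ((d + 2) ^ 2 * (d * (d + 4))) := by nlinarith
  nlinarith [Nat.mul_le_mul h hde]

theorem choose_succ_le_choose_of_sq_le {a b k : ℕ} (h : b ^ 2 ≤ 4 * a) (hk : 2 ≤ k) :
    b.choose (k + 1) ≤ a.choose k := by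
  induction k, hk using Nat.le_induction with
  | base => exact choose_three_le_choose_two_of_sq_le h
  | succ k _ ih =>
    have hba := le_succ_of_sq_le_four_mul h
    refine Nat.le_of_mul_le_mul_right ?_ (succ_pos k)
    calc b.choose (k + 2) * (k + 1) ≤ b.choose (k + 2) * (k + 2) := by gcongr; omega
      _ = b.choose (k + 1) * (b - (k + 1)) := choose_succ_right_eq b (k + 1)
      _ ≤ a.choose k * (a - k) := Nat.mul_le_mul ih (by omega)
      _ = a.choose (k + 1) * (k + 1) := (choose_succ_right_eq a k).symm

end Nat

theorem sq_le_four_mul_of_choose_two_sub_choose_three_le {b c : ℕ} {L : ℤ} (hb : 36 ≤ b)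
    (hcb : c ^ 2 ≤ 4 * b) (hL : 1 + (b.choose 2 : ℤ) - c.choose 3 ≤ L) : (b : ℤ) ^ 2 ≤ 4 * L := by
  have hb2 : (b.choose 2 : ℤ) * 2 = b * (b - 1) := by
    have := Nat.choose_succ_right_eq b 1
    norm_num at this
    have hz : (b.choose 2 : ℤ) * 2 = b * ((b - 1 : ℕ) : ℤ) := by exact_mod_cast this
    rw [hz, Nat.cast_sub (by omega), Nat.cast_one]
  have hc3 : (c.choose 3 : ℤ) * 6 ≤ c ^ 3 := by
    have := Nat.choose_le_pow_div (α := ℚ) 3 c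
    rw [le_div_iff₀ (by positivity)] at this
    exact_mod_cast this
  have hcb' : (c : ℤ) ^ 2 ≤ 4 * b := by exact_mod_cast hcb
  have hb' : (36 : ℤ) ≤ b := by exact_mod_cast hb
  -- `64 c² ≤ 256 b ≤ 9 (b - 2)²` needs `b ≥ 36`; then `c³ ≤ 4 b c ≤ 3 b (b - 2) / 2`.
  have h8c : 8 * (c : ℤ) ≤ 3 * (b - 2) := by nlinarith
  nlinarith

theorem Int.toNat_sq_le_four_mul_toNat {x y : ℤ} (h : (x.toNat : ℤ) ^ 2 ≤ 4 * y) :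
    x.toNat ^ 2 ≤ 4 * y.toNat := by
  zify
  linarith [Int.self_le_toNat y]

def EllRecurrence (ℓ : ℕ → ℤ) : Prop :=
  ∀ n : ℕ, ℓ (n + 1) = 1 + ∑ j ∈ range (n + 1), (-1) ^ j * ((ℓ (n - j)).toNat.choose (j + 2) : ℤ)

namespace EllRecurrence

variable {ℓ : ℕ → ℤ}

theorem initial_values (hrec : EllRecurrence ℓ) (h0 : ℓ 0 = 3) :
    ℓ 1 = 4 ∧ ℓ 2 = 6 ∧ ℓ 3 = 12 ∧ ℓ 4 = 48 := by
  have h1 : ℓ 1 = 4 := by rw [hrec 0]; simp [h0]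
  have h2 : ℓ 2 = 6 := by rw [hrec 1]; simp [sum_range_succ, h0, h1]; decide
  have h3 : ℓ 3 = 12 := by rw [hrec 2]; simp [sum_range_succ, h0, h1, h2]; decide
  have h4 : ℓ 4 = 48 := by rw [hrec 3]; simp [sum_range_succ, h0, h1, h2, h3]; decide
  exact ⟨h1, h2, h3, h4⟩

theorem choose_two_sub_choose_three_le (hrec : EllRecurrence ℓ) {m : ℕ}
    (hgrowth : ∀ i ≤ m, (ℓ i).toNat ^ 2 ≤ 4 * (ℓ (i + 1)).toNat) :
    1 + ((ℓ (m + 1)).toNat.choose 2 : ℤ) - (ℓ m).toNat.choose 3 ≤ ℓ (m + 2) := by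
  have hanti : ∀ i, i + 1 < m + 2 → ((ℓ (m + 1 - (i + 1))).toNat.choose (i + 1 + 2) : ℤ) ≤
      (ℓ (m + 1 - i)).toNat.choose (i + 2) := by
    intro i hi
    have := Nat.choose_succ_le_choose_of_sq_le (hgrowth (m - i) (by omega)) (k := i + 2) (by omega)
    rw [show m - i + 1 = m + 1 - i by omega] at this
    rw [show m + 1 - (i + 1) = m - i by omega]
    exact_mod_cast this
  have hsum := sub_le_alternating_sum
    (f := fun j ↦ ((ℓ (m + 1 - j)).toNat.choose (j + 2) : ℤ)) hanti (fun _ _ ↦ by positivity)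
  simp only [Nat.sub_zero, zero_add, Nat.add_sub_cancel] at hsum
  rw [hrec (m + 1)]
  linarith

theorem growth (hrec : EllRecurrence ℓ) (h0 : ℓ 0 = 3) (m : ℕ) :
    ((ℓ m).toNat : ℤ) ^ 2 ≤ 4 * ℓ (m + 1) ∧ (3 ≤ m → 12 ≤ ℓ m) := by
  obtain ⟨h1, h2, h3, h4⟩ := hrec.initial_values h0
  induction m using Nat.strong_induction_on with
  | _ m ih =>
    match m with
    | 0 => simp [h0, h1]
    | 1 => simp [h1, h2]
    | 2 => simp [h2, h3]
    | 3 => simp [h3, h4]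
    | m + 4 =>
      obtain ⟨hprev, h12⟩ := ih (m + 3) (by omega)
      rw [Int.toNat_of_nonneg (by linarith [h12 (by omega)])] at hprev
      have hb36 : 36 ≤ ℓ (m + 4) := by nlinarith [h12 (by omega)]
      refine ⟨sq_le_four_mul_of_choose_two_sub_choose_three_le (by omega) ?_
        (hrec.choose_two_sub_choose_three_le fun i _ ↦
          Int.toNat_sq_le_four_mul_toNat (ih i (by omega)).1),
        fun _ ↦ by omega⟩
      exact Int.toNat_sq_le_four_mul_toNat (ih (m + 3) (by omega)).1

theorem nonneg (hrec : EllRecurrence ℓ) (h0 : ℓ 0 = 3) : ∀ m, 0 ≤ ℓ m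
  | 0 => by rw [h0]; norm_num
  | m + 1 => by nlinarith [(hrec.growth h0 m).1]

theorem alternating_sum_choose_succ_eq_one (hrec : EllRecurrence ℓ) (hnn : ∀ m, 0 ≤ ℓ m)
    (n : ℕ) : ∑ i ∈ range (n + 2), (-1) ^ i * ((ℓ (n + 1 - i)).toNat.choose (i + 1) : ℤ) = 1 := by
  have hshift : ∀ i ∈ range (n + 1), (-1 : ℤ) ^ (i + 1) *
      ((ℓ (n + 1 - (i + 1))).toNat.choose (i + 1 + 1) : ℤ) =
      -((-1) ^ i * ((ℓ (n - i)).toNat.choose (i + 2) : ℤ)) := by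
    intro i _
    rw [Nat.add_sub_add_right]
    ring
  rw [sum_range_succ', sum_congr rfl hshift, sum_neg_distrib]
  simp only [pow_zero, one_mul, Nat.sub_zero, Nat.choose_one_right, zero_add,
    Int.toNat_of_nonneg (hnn _)]
  linarith [hrec n]

end EllRecurrence

theorem ell_alt_recursion (ℓ : ℕ → ℤ) (h0 : ℓ 0 = 3)
    (hrec : ∀ n : ℕ, ℓ (n + 1) =
      1 + ∑ j ∈ Finset.range (n + 1), (-1) ^ j * ((ℓ (n - j)).toNat.choose (j + 2) : ℤ)) (n : ℕ) (hn : 1 ≤ n) :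
    ℓ (n + 1) = ∑ j ∈ Finset.Icc 1 (n + 1),
      (-1) ^ (j + 1) * (((ℓ (n + 1 - j) + 1).toNat.choose (j + 1) : ℤ)) := by
  have hnn := EllRecurrence.nonneg hrec h0
  obtain ⟨t, rfl⟩ := Nat.exists_eq_add_one.2 hn
  have hIcc : Icc 1 (t + 1 + 1) = (range (t + 2)).map (addRightEmbedding 1) := by
    rw [Nat.range_succ_eq_Icc_zero, map_add_right_Icc]
  have hpascal : ∀ i ∈ range (t + 2), (-1 : ℤ) ^ (i + 1 + 1) *
      ((ℓ (t + 1 + 1 - (i + 1)) + 1).toNat.choose (i + 1 + 1) : ℤ) =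
      (-1) ^ i * ((ℓ (t + 1 - i)).toNat.choose (i + 2) : ℤ) +
      (-1) ^ i * ((ℓ (t + 1 - i)).toNat.choose (i + 1) : ℤ) := by
    intro i _
    rw [Nat.add_sub_add_right, ← Nat.cast_one, Int.toNat_add_nat (hnn _), Nat.choose_succ_succ']
    push_cast
    ring
  rw [hIcc, sum_map]
  simp only [addRightEmbedding_apply]
  rw [sum_congr rfl hpascal, sum_add_distrib,
    EllRecurrence.alternating_sum_choose_succ_eq_one hrec hnn t, hrec (t + 1)]
  ring
end

section
/- Define the sequence b_d by b_0 = b_1 = 0, b_2 = 2, and for d ≥ 2, b_{d+1} = c_{-(d+1)} + Σ_{j=1}^{d} (-1)^(d-j) · C(b_j + 1, d - j + 2), where c_{-2} = 2, c_{-4} = -1, and c_s = 0 for all other s, and C is the polynomial binomial coefficient. Then b_3 = 3, b_4 = 4, and for all d ≥ 3, b_d = ℓ_{d-3}, where ℓ_0 = 3 and ℓ_{n+1} = 1 + Σ_{j=0}^{n} (-1)^j · binom(ℓ_{n-j}, j+2). -/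
/-- The polynomial binomial coefficient `C(m, r) = (1/r!) * ∏_{j=0}^{r-1} (m - j)`. -/
noncomputable def pbc (m : ℚ) (r : ℕ) : ℚ :=
  (∏ j ∈ Finset.range r, (m - j)) / (r.factorial : ℚ)

/-!
For `d ≥ 4` the terms `j = 1, 2` of the recursion for `b` vanish, and once `b j = ℓ (j - 3)`
Pascal's rule splits `C(ℓ + 1, k + 2)` into `C(ℓ, k + 2) + C(ℓ, k + 1)`: the first alternating sum
is `ℓ_m - 1` by the recursion for `ℓ`, the second is `1` by the same recursion one step earlier,
read with `C(ℓ, 1) = ℓ`; hence `b_{m+3} = ℓ_m`.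

That reading needs `ℓ ≥ 0`, because the recursion for `ℓ` goes through `toNat`. Positivity comes
from the growth invariant `ℓ_n ^ 2 ≤ 4 ℓ_{n+1}`: it gives `C(ℓ_i, r + 1) ≤ C(ℓ_{i+1}, r)` for
`r ≥ 2`, so the terms of the alternating sum defining `ℓ_{n+2}` decrease and
`ℓ_{n+2} ≥ 1 + C(ℓ_{n+1}, 2) - C(ℓ_n, 3)`, which propagates the invariant as soon as `ℓ_n ≥ 12`.
-/

open Finset

theorem alternating_sum_range_succ {R : Type*} [Ring R] (t : ℕ → R) (n : ℕ) :
    ∑ j ∈ range (n + 1), (-1) ^ j * t j = t 0 - ∑ j ∈ range n, (-1) ^ j * t (j + 1) := by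
  rw [sum_range_succ', sub_eq_add_neg, ← sum_neg_distrib, add_comm]
  simp [pow_succ]

theorem alternating_sum_nonneg_and_le {R : Type*} [Ring R] [LinearOrder R] [IsOrderedRing R]
    {t : ℕ → R} (ht : ∀ j, 0 ≤ t j) {n : ℕ} (hanti : ∀ j, j + 1 < n → t (j + 1) ≤ t j) :
    0 ≤ ∑ j ∈ range n, (-1) ^ j * t j ∧ ∑ j ∈ range n, (-1) ^ j * t j ≤ t 0 := by
  induction n generalizing t with
  | zero => simpa using ht 0
  | succ n ih =>
    obtain ⟨hnonneg, hle⟩ := ih (fun j ↦ ht (j + 1)) (fun j hj ↦ hanti (j + 1) (by omega))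
    rw [alternating_sum_range_succ]
    constructor
    · rcases n with _ | n
      · simpa using ht 0
      · exact sub_nonneg.2 (hle.trans (hanti 0 (by omega)))
    · exact sub_le_self _ hnonneg

theorem sub_le_alternating_sum_s17 {R : Type*} [Ring R] [LinearOrder R] [IsOrderedRing R]
    {t : ℕ → R} (ht : ∀ j, 0 ≤ t j) {n : ℕ} (hanti : ∀ j < n, t (j + 1) ≤ t j) :
    t 0 - t 1 ≤ ∑ j ∈ range (n + 1), (-1) ^ j * t j := by
  rw [alternating_sum_range_succ]
  exact sub_le_sub_left (alternating_sum_nonneg_and_le (fun j ↦ ht (j + 1))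
    (fun j hj ↦ hanti (j + 1) (by omega))).2 _

theorem Nat.choose_three_le_choose_two {a b : ℕ} (hab : a ≤ b) (hsq : a ^ 2 ≤ 4 * b) :
    a.choose 3 ≤ b.choose 2 := by
  rcases Nat.lt_or_ge a 2 with ha | ha
  · rw [Nat.choose_eq_zero_of_lt (by omega)]
    exact Nat.zero_le _
  obtain ⟨c, rfl⟩ : ∃ c, a = c + 2 := ⟨a - 2, by omega⟩
  obtain ⟨e, rfl⟩ : ∃ e, b = e + 1 := ⟨b - 1, by omega⟩
  have hc := Nat.descFactorial_eq_factorial_mul_choose (c + 2) 3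
  have he := Nat.descFactorial_eq_factorial_mul_choose (e + 1) 2
  norm_num [Nat.descFactorial, Nat.factorial] at hc he
  nlinarith

theorem Nat.choose_succ_le_choose_of_sq_le_s17 {a b : ℕ} (hab : a ≤ b) (hsq : a ^ 2 ≤ 4 * b)
    {r : ℕ} (hr : 2 ≤ r) : a.choose (r + 1) ≤ b.choose r := by
  induction r, hr using Nat.le_induction with
  | base => exact Nat.choose_three_le_choose_two hab hsq
  | succ r _ ih =>
    refine Nat.le_of_mul_le_mul_right ?_ (Nat.succ_pos (r + 1))
    calc a.choose (r + 1 + 1) * (r + 1 + 1) = a.choose (r + 1) * (a - (r + 1)) :=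
          Nat.choose_succ_right_eq a (r + 1)
      _ ≤ b.choose r * (b - r) := Nat.mul_le_mul ih (by omega)
      _ = b.choose (r + 1) * (r + 1) := (Nat.choose_succ_right_eq b r).symm
      _ ≤ b.choose (r + 1) * (r + 1 + 1) := Nat.mul_le_mul_left _ (by omega)

theorem Int.toNat_choose_succ_le_choose {x y : ℤ} (hx : 0 ≤ x) (hxy : x ≤ y) (hsq : x ^ 2 ≤ 4 * y)
    {r : ℕ} (hr : 2 ≤ r) : x.toNat.choose (r + 1) ≤ y.toNat.choose r := by
  lift x to ℕ using hx
  lift y to ℕ using (by omega)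
  simp only [Int.toNat_natCast]
  exact Nat.choose_succ_le_choose_of_sq_le_s17 (by exact_mod_cast hxy) (by exact_mod_cast hsq) hr

theorem Int.le_of_three_le_of_sq_le_four_mul {x y : ℤ} (hx : 3 ≤ x) (hsq : x ^ 2 ≤ 4 * y) :
    x ≤ y := by
  nlinarith

theorem Int.sq_le_four_mul_choose_sub_choose {x y : ℤ} (hx : 12 ≤ x) (hsq : x ^ 2 ≤ 4 * y) :
    y ^ 2 ≤ 4 * (1 + y.toNat.choose 2 - x.toNat.choose 3) := by
  have hy : 36 ≤ y := by nlinarith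
  have hx4 : x ^ 4 ≤ 16 * y ^ 2 := by nlinarith [mul_le_mul hsq hsq (by positivity) (by positivity)]
  have hx3 : 12 * x ^ 3 ≤ x ^ 4 := by nlinarith [pow_nonneg (by omega : (0 : ℤ) ≤ x) 3]
  lift x to ℕ using (by omega)
  lift y to ℕ using (by omega)
  simp only [Int.toNat_natCast]
  obtain ⟨c, rfl⟩ : ∃ c, x = c + 2 := ⟨x - 2, by omega⟩
  obtain ⟨e, rfl⟩ : ∃ e, y = e + 1 := ⟨y - 1, by omega⟩
  have hc := Nat.descFactorial_eq_factorial_mul_choose (c + 2) 3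
  have he := Nat.descFactorial_eq_factorial_mul_choose (e + 1) 2
  norm_num [Nat.descFactorial, Nat.factorial] at hc he
  zify at hc he
  push_cast at hx hy hx3 hx4 ⊢
  nlinarith

theorem three_le_of_sq_le_four_mul {ℓ : ℕ → ℤ} (h0 : ℓ 0 = 3) {n : ℕ}
    (hsq : ∀ k < n, ℓ k ^ 2 ≤ 4 * ℓ (k + 1)) :
    ∀ k ≤ n, 3 ≤ ℓ k := by
  intro k hk
  induction k with
  | zero => omega
  | succ k ih => nlinarith [ih (by omega), hsq k (by omega)]

theorem pbc_natCast (m r : ℕ) : pbc m r = m.choose r := by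
  rw [pbc, ← descPochhammer_eval_eq_prod_range, Nat.cast_choose_eq_descPochhammer_div]

def HamiltonRecursion (ℓ : ℕ → ℤ) : Prop :=
  ∀ n : ℕ, ℓ (n + 1) =
    1 + ∑ j ∈ range (n + 1), (-1) ^ j * ((ℓ (n - j)).toNat.choose (j + 2) : ℤ)

namespace HamiltonRecursion

variable {ℓ : ℕ → ℤ}

theorem one_add_choose_sub_choose_le (hrec : HamiltonRecursion ℓ) {n : ℕ}
    (hgrowth : ∀ i ≤ n, 0 ≤ ℓ i ∧ ℓ i ≤ ℓ (i + 1) ∧ ℓ i ^ 2 ≤ 4 * ℓ (i + 1)) :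
    1 + ((ℓ (n + 1)).toNat.choose 2 : ℤ) - (ℓ n).toNat.choose 3 ≤ ℓ (n + 2) := by
  have key := sub_le_alternating_sum_s17 (t := fun j ↦ ((ℓ (n + 1 - j)).toNat.choose (j + 2) : ℤ))
    (fun j ↦ Nat.cast_nonneg _) (n := n + 1) fun j hj ↦ by
      obtain ⟨hnonneg, hle, hsq⟩ := hgrowth (n - j) (by omega)
      rw [show n + 1 - (j + 1) = n - j by omega, show n + 1 - j = n - j + 1 by omega]
      exact_mod_cast Int.toNat_choose_succ_le_choose hnonneg hle hsq (r := j + 2) (by omega)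
  rw [hrec (n + 1)]
  simp only [Nat.sub_zero, zero_add, Nat.add_sub_cancel] at key
  linarith

theorem sq_le_four_mul (hrec : HamiltonRecursion ℓ) (h0 : ℓ 0 = 3) :
    ∀ n, ℓ n ^ 2 ≤ 4 * ℓ (n + 1) := by
  have h1 : ℓ 1 = 4 := by rw [hrec 0]; simp [h0]
  have h2 : ℓ 2 = 6 := by rw [hrec 1]; simp [sum_range_succ, h0, h1]; decide
  have h3 : ℓ 3 = 12 := by rw [hrec 2]; simp [sum_range_succ, h0, h1, h2]; decide
  have h4 : ℓ 4 = 48 := by rw [hrec 3]; simp [sum_range_succ, h0, h1, h2, h3]; decide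
  intro n
  induction n using Nat.strong_induction_on with | _ n ih =>
  have hge := three_le_of_sq_le_four_mul h0 ih
  match n with
  | 0 | 1 | 2 | 3 => simp [h0, h1, h2, h3, h4]
  | m + 4 =>
    have hmono : MonotoneOn ℓ (Set.Iic (m + 4)) :=
      monotoneOn_of_le_add_one Set.ordConnected_Iic fun k _ _ hk ↦
        Int.le_of_three_le_of_sq_le_four_mul (hge k (by grind)) (ih k (by grind))
    have h12 : 12 ≤ ℓ (m + 3) := h3 ▸ hmono (by simp) (by simp) (by omega)
    have hstep := hrec.one_add_choose_sub_choose_le (n := m + 3) fun i hi ↦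
      ⟨by linarith [hge i (by omega)], hmono (by grind) (by grind) (by omega),
        ih i (by omega)⟩
    calc ℓ (m + 4) ^ 2
        ≤ 4 * (1 + (ℓ (m + 4)).toNat.choose 2 - (ℓ (m + 3)).toNat.choose 3) :=
          Int.sq_le_four_mul_choose_sub_choose h12 (ih (m + 3) (by omega))
      _ ≤ 4 * ℓ (m + 5) := mul_le_mul_of_nonneg_left hstep (by norm_num)

theorem three_le (hrec : HamiltonRecursion ℓ) (h0 : ℓ 0 = 3) (n : ℕ) : 3 ≤ ℓ n :=
  three_le_of_sq_le_four_mul h0 (fun k _ ↦ hrec.sq_le_four_mul h0 k) n le_rfl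

theorem alternating_sum_choose_succ (hrec : HamiltonRecursion ℓ) {n : ℕ} (hn : 0 ≤ ℓ (n + 1)) :
    ∑ k ∈ range (n + 2), (-1) ^ k * ((ℓ (n + 1 - k)).toNat.choose (k + 1) : ℤ) = 1 := by
  rw [alternating_sum_range_succ]
  have hsum := hrec n
  simp only [Nat.sub_zero, zero_add, Nat.choose_one_right, Int.toNat_of_nonneg hn,
    Nat.add_sub_add_right] at hsum ⊢
  linarith

theorem eq_alternating_sum_choose_add_one (hrec : HamiltonRecursion ℓ) {n : ℕ}
    (hn : 0 ≤ ℓ (n + 1)) :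
    ℓ (n + 2) =
      ∑ k ∈ range (n + 2), (-1) ^ k * (((ℓ (n + 1 - k)).toNat + 1).choose (k + 2) : ℤ) := by
  simp only [Nat.choose_succ_succ', Nat.cast_add, mul_add, sum_add_distrib,
    hrec.alternating_sum_choose_succ hn, hrec (n + 1)]

theorem sum_Icc_pbc_eq (hrec : HamiltonRecursion ℓ)
    (hℓ : ∀ k, 0 ≤ ℓ k) {b : ℕ → ℚ} {n : ℕ} (hb1 : b 1 = 0) (hb2 : b 2 = 2)
    (hb : ∀ j ∈ Icc 3 (n + 4), b j = ℓ (j - 3)) :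
    ∑ j ∈ Icc 1 (n + 4), (-1) ^ (n + 4 - j) * pbc (b j + 1) (n + 4 - j + 2) = ℓ (n + 2) := by
  have hsplit : Icc 1 (n + 4) = {1, 2} ∪ Ico 3 (n + 5) := by
    ext j; simp only [mem_Icc, mem_union, mem_insert, mem_singleton, mem_Ico]; omega
  have hlow : ∀ j ∈ ({1, 2} : Finset ℕ),
      (-1) ^ (n + 4 - j) * pbc (b j + 1) (n + 4 - j + 2) = 0 := by
    have hb1' : b 1 + 1 = ((1 : ℕ) : ℚ) := by simp [hb1]
    have hb2' : b 2 + 1 = ((3 : ℕ) : ℚ) := by rw [hb2]; norm_num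
    simp only [mem_insert, mem_singleton, forall_eq_or_imp, forall_eq, hb1', hb2', pbc_natCast]
    exact ⟨by rw [Nat.choose_eq_zero_of_lt (by omega)]; simp,
      by rw [Nat.choose_eq_zero_of_lt (by omega)]; simp⟩
  let f : ℕ → ℚ := fun k ↦ (-1) ^ k * (((ℓ (n + 1 - k)).toNat + 1).choose (k + 2) : ℚ)
  have hhigh : ∀ j ∈ Ico 3 (n + 5),
      (-1) ^ (n + 4 - j) * pbc (b j + 1) (n + 4 - j + 2) = f (n + 4 - j) := by
    intro j hj
    rw [mem_Ico] at hj
    simp only [f]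
    have hcast : (ℓ (j - 3) : ℚ) + 1 = (((ℓ (j - 3)).toNat + 1 : ℕ) : ℚ) := by
      rw [Nat.cast_succ, ← Int.cast_natCast, Int.toNat_of_nonneg (hℓ _)]
    rw [hb j (mem_Icc.2 ⟨hj.1, by omega⟩), show n + 1 - (n + 4 - j) = j - 3 by omega, hcast,
      pbc_natCast]
  rw [hsplit, sum_union (disjoint_left.2 (by simp)), sum_eq_zero hlow, zero_add,
    sum_congr rfl hhigh, sum_Ico_reflect f 3 (by omega : n + 5 ≤ n + 4 + 1),
    hrec.eq_alternating_sum_choose_add_one (hℓ _), range_eq_Ico]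
  simp [f]

end HamiltonRecursion

theorem b_eq_hamilton_general (ℓ : ℕ → ℤ) (h0 : ℓ 0 = 3)
    (hrec : ∀ n : ℕ, ℓ (n + 1) =
      1 + ∑ j ∈ Finset.range (n + 1), (-1) ^ j * ((ℓ (n - j)).toNat.choose (j + 2) : ℤ))
    (b : ℕ → ℚ) (hb1 : b 1 = 0) (hb2 : b 2 = 2)
    (hbrec : ∀ d : ℕ, 2 ≤ d →
      b (d + 1) = (if d + 1 = 2 then (2 : ℚ) else if d + 1 = 4 then -1 else 0) +
        ∑ j ∈ Finset.Icc 1 d, (-1) ^ (d - j) * pbc (b j + 1) (d - j + 2)) :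
    b 3 = 3 ∧ b 4 = 4 ∧ ∀ d : ℕ, 3 ≤ d → b d = (ℓ (d - 3) : ℚ) := by
  have hℓ : ∀ k, 0 ≤ ℓ k := fun k ↦ by linarith [HamiltonRecursion.three_le hrec h0 k]
  have hb3 : b 3 = 3 := by
    rw [hbrec 2 le_rfl]
    norm_num [sum_Icc_succ_top, hb1, hb2, pbc, prod_range_succ, Nat.factorial]
  have hb4 : b 4 = 4 := by
    rw [hbrec 3 (by norm_num)]
    norm_num [sum_Icc_succ_top, hb1, hb2, hb3, pbc, prod_range_succ, Nat.factorial]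
  refine ⟨hb3, hb4, fun d hd ↦ ?_⟩
  induction d using Nat.strong_induction_on with | _ d ih =>
  match d, hd with
  | 3, _ => simp [hb3, h0]
  | 4, _ => simp [hb4, hrec 0, h0]
  | n + 5, _ =>
    rw [hbrec (n + 4) (by omega), if_neg (by omega), if_neg (by omega), zero_add,
      HamiltonRecursion.sum_Icc_pbc_eq hrec hℓ hb1 hb2 fun j hj ↦
        ih j (by grind) (by grind)]
    rfl

theorem b_eq_hamilton (ℓ : ℕ → ℤ) (h0 : ℓ 0 = 3)
    (hrec : ∀ n : ℕ, ℓ (n + 1) =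
      1 + ∑ j ∈ Finset.range (n + 1), (-1) ^ j * ((ℓ (n - j)).toNat.choose (j + 2) : ℤ))
    (b : ℕ → ℚ) (hb0 : b 0 = 0) (hb1 : b 1 = 0) (hb2 : b 2 = 2)
    (hbrec : ∀ d : ℕ, 2 ≤ d →
      b (d + 1) = (if d + 1 = 2 then (2 : ℚ) else if d + 1 = 4 then -1 else 0) +
        ∑ j ∈ Finset.Icc 1 d, (-1) ^ (d - j) * pbc (b j + 1) (d - j + 2)) :
    b 3 = 3 ∧ b 4 = 4 ∧ ∀ d : ℕ, 3 ≤ d → b d = (ℓ (d - 3) : ℚ) :=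
  b_eq_hamilton_general ℓ h0 hrec b hb1 hb2 hbrec
end

section
/- Define ℓ_n by ℓ_0 = 3 and ℓ_{n+1} = 1 + Σ_{j=0}^{n} (-1)^j · binom(ℓ_{n-j}, j+2). Then for all n ≥ 0, 1 + binom(ℓ_n, 2) - binom(ℓ_{n-1}, 3) ≤ ℓ_{n+1} ≤ 1 + binom(ℓ_n, 2), where the term binom(ℓ_{n-1}, 3) is interpreted as 0 when n = 0. -/
/-!
Write `ℓ (n+1) = 1 + C(ℓ n, 2) - Sₙ`, where `Sₙ` is the alternating sum of the terms
`C(ℓ (n-j), j+2)` with `j ≥ 1`. If `ℓ m (ℓ m - 1) ≤ 3 ℓ (m+1)` for the earlier `m`, then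
`C(ℓ m, k+1) ≤ C(ℓ (m+1), k)` for `k ≥ 2`, so these terms are nonincreasing in `j` and
`0 ≤ Sₙ ≤ C(ℓ (n-1), 3)`. Conversely, the resulting lower bound
`ℓ (n+1) ≥ 1 + C(ℓ n, 2) - C(ℓ (n-1), 3)` propagates the growth condition as soon as
`ℓ (n-1) ≥ 9`, which holds from `n = 4` on (`ℓ = 3, 4, 6, 12, 48, …`); one induction gives both.
-/

open Nat

theorem sum_range_succ_alternating {R : Type*} [Ring R] (a : ℕ → R) (n : ℕ) :
    ∑ j ∈ Finset.range (n + 1), (-1) ^ j * a j =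
      a 0 - ∑ j ∈ Finset.range n, (-1) ^ j * a (j + 1) := by
  simp [Finset.sum_range_succ', pow_succ, sub_eq_neg_add, Finset.sum_neg_distrib]

theorem sum_range_alternating_mem_Icc {R : Type*} [Ring R] [PartialOrder R]
    [IsOrderedAddMonoid R] {a : ℕ → R} (ha : 0 ≤ a) {n : ℕ}
    (hanti : ∀ j, j + 1 < n → a (j + 1) ≤ a j) :
    ∑ j ∈ Finset.range n, (-1) ^ j * a j ∈ Set.Icc 0 (a 0) := by
  induction n generalizing a with
  | zero => simpa using ha 0
  | succ n ih =>
    obtain ⟨htail_nonneg, htail_le⟩ :=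
      ih (fun j => ha (j + 1)) fun j hj => hanti (j + 1) (by omega)
    rw [sum_range_succ_alternating]
    refine ⟨?_, sub_le_self _ htail_nonneg⟩
    rcases n with _ | n
    · simpa using ha 0
    · exact sub_nonneg.2 (htail_le.trans (hanti 0 (by omega)))

theorem Nat.two_mul_choose_two (n : ℕ) : 2 * n.choose 2 = n * (n - 1) := by
  simpa [Nat.descFactorial, mul_comm] using (Nat.descFactorial_eq_factorial_mul_choose n 2).symm

theorem Nat.six_mul_choose_three (n : ℕ) : 6 * n.choose 3 = n * (n - 1) * (n - 2) := by
  simpa [Nat.descFactorial, Nat.factorial, mul_comm, mul_left_comm] using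
    (Nat.descFactorial_eq_factorial_mul_choose n 3).symm

theorem Nat.choose_succ_le_choose_of_mul_sub_one_le {n M k : ℕ} (hk : 2 ≤ k)
    (h : n * (n - 1) ≤ 3 * M) : n.choose (k + 1) ≤ M.choose k := by
  obtain ⟨m, rfl⟩ := Nat.exists_eq_add_of_le' hk
  rcases Nat.lt_or_ge n 2 with hn | hn
  · rw [Nat.choose_eq_zero_of_lt (by omega)]
    exact Nat.zero_le _
  obtain ⟨p, rfl⟩ := Nat.exists_eq_add_of_le' hn
  rw [show p + 2 - 1 = p + 1 by omega] at h
  obtain ⟨q, rfl⟩ : ∃ q, M = q + 1 := Nat.exists_eq_add_of_le' (by nlinarith)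
  have hpq : p ≤ q := by nlinarith
  refine Nat.le_of_mul_le_mul_left (c := (m + 3)!) ?_ (Nat.factorial_pos _)
  calc (m + 3)! * (p + 2).choose (m + 2 + 1)
      = (p + 2) * (p + 1) * p.descFactorial (m + 1) := by
        rw [← Nat.descFactorial_eq_factorial_mul_choose, Nat.succ_descFactorial_succ,
          Nat.succ_descFactorial_succ]
        ring
    _ ≤ 3 * (q + 1) * q.descFactorial (m + 1) := by gcongr
    _ ≤ (m + 3) * ((q + 1) * q.descFactorial (m + 1)) := by
        rw [← mul_assoc]
        gcongr
        omega
    _ = (m + 3)! * (q + 1).choose (m + 2) := by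
        rw [← Nat.succ_descFactorial_succ, Nat.descFactorial_eq_factorial_mul_choose,
          Nat.factorial_succ (m + 2)]
        ring

theorem three_mul_choose_three_le_choose_two {A B : ℕ} (hB : 9 ≤ B) (h : B * (B - 1) ≤ 3 * A) :
    3 * B.choose 3 ≤ A.choose 2 := by
  suffices hprod : B * (B - 1) * (B - 2) ≤ A * (A - 1) by
    rw [← Nat.six_mul_choose_three, ← Nat.two_mul_choose_two] at hprod
    omega
  have hA : 1 ≤ A := by nlinarith [Nat.mul_le_mul hB (show 8 ≤ B - 1 by omega)]
  zify [hA, show 2 ≤ B by omega, show 1 ≤ B by omega] at h ⊢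
  set x : ℤ := B * (B - 1)
  -- `9 A (A - 1) ≥ x (x - 3) ≥ 9 (B - 2) x`, using `3 A ≥ x` and then `B ≥ 9`
  have hA_side : 0 ≤ (3 * A - x) * (3 * A + x - 3) := by
    apply mul_nonneg <;> nlinarith
  have hB_side : 0 ≤ x * (x - 3 - 9 * (B - 2)) := by
    apply mul_nonneg <;> nlinarith
  nlinarith

theorem mul_sub_one_le_three_mul_toNat {A B : ℕ} {x : ℤ} (hB : 9 ≤ B)
    (hBA : B * (B - 1) ≤ 3 * A) (hx : 1 + (A.choose 2 : ℤ) - B.choose 3 ≤ x) :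
    A * (A - 1) ≤ 3 * x.toNat := by
  have hchoose : (3 * B.choose 3 : ℤ) ≤ A.choose 2 := by
    exact_mod_cast three_mul_choose_three_le_choose_two hB hBA
  have hx_le := Int.self_le_toNat x
  rw [← Nat.two_mul_choose_two]
  zify
  linarith

def SatisfiesEllRecursion (ℓ : ℕ → ℤ) : Prop :=
  ∀ n : ℕ, ℓ (n + 1) =
    1 + ∑ j ∈ Finset.range (n + 1), (-1) ^ j * ((ℓ (n - j)).toNat.choose (j + 2) : ℤ)

def GrowsAt (ℓ : ℕ → ℤ) (m : ℕ) : Prop :=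
  (ℓ m).toNat * ((ℓ m).toNat - 1) ≤ 3 * (ℓ (m + 1)).toNat

namespace SatisfiesEllRecursion

variable {ℓ : ℕ → ℤ}

theorem bounds_of_growsAt (hrec : SatisfiesEllRecursion ℓ) {n : ℕ}
    (hgrow : ∀ m, m + 1 < n → GrowsAt ℓ m) :
    1 + ((ℓ n).toNat.choose 2 : ℤ) -
        (if n = 0 then 0 else ((ℓ (n - 1)).toNat.choose 3 : ℤ)) ≤ ℓ (n + 1) ∧
      ℓ (n + 1) ≤ 1 + ((ℓ n).toNat.choose 2 : ℤ) := by
  set b : ℕ → ℤ := fun i => ((ℓ (n - (i + 1))).toNat.choose (i + 3) : ℤ)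
  have hell : ℓ (n + 1) =
      1 + ((ℓ n).toNat.choose 2 : ℤ) - ∑ i ∈ Finset.range n, (-1) ^ i * b i := by
    rw [hrec n, sum_range_succ_alternating, Nat.sub_zero]
    simp only [b]
    ring
  have hanti : ∀ i, i + 1 < n → b (i + 1) ≤ b i := by
    intro i hi
    have hm : n - (i + 1) = n - (i + 2) + 1 := by omega
    simp only [b, hm]
    exact_mod_cast Nat.choose_succ_le_choose_of_mul_sub_one_le (by omega) (hgrow _ (by omega))
  obtain ⟨htail_nonneg, htail_le⟩ :=
    sum_range_alternating_mem_Icc (fun i => by positivity) hanti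
  refine ⟨?_, by linarith⟩
  split_ifs with hn
  · subst hn
    simp [hell]
  · simp only [b] at htail_le
    linarith

theorem first_values (hrec : SatisfiesEllRecursion ℓ) (h0 : ℓ 0 = 3) :
    ℓ 1 = 4 ∧ ℓ 2 = 6 ∧ ℓ 3 = 12 ∧ ℓ 4 = 48 := by
  have h1 : ℓ 1 = 4 := by simp [hrec 0, h0]
  have h2 : ℓ 2 = 6 := by simp +decide [hrec 1, Finset.sum_range_succ, h0, h1]
  have h3 : ℓ 3 = 12 := by simp +decide [hrec 2, Finset.sum_range_succ, h0, h1, h2]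
  exact ⟨h1, h2, h3, by simp +decide [hrec 3, Finset.sum_range_succ, h0, h1, h2, h3]⟩

theorem growsAt (hrec : SatisfiesEllRecursion ℓ) (h0 : ℓ 0 = 3) (m : ℕ) : GrowsAt ℓ m := by
  obtain ⟨h1, h2, h3, h4⟩ := hrec.first_values h0
  suffices h : ∀ k, 12 ≤ (ℓ (k + 3)).toNat ∧ ∀ m ≤ k + 3, GrowsAt ℓ m from
    (h m).2 m (by omega)
  intro k
  induction k with
  | zero =>
    refine ⟨by simp [h3], fun m hm => ?_⟩
    interval_cases m <;> simp [GrowsAt, h0, h1, h2, h3, h4]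
  | succ k ih =>
    obtain ⟨hbig, hgrow⟩ := ih
    have hstep : GrowsAt ℓ (k + 3) := hgrow (k + 3) le_rfl
    have hlower :
        1 + ((ℓ (k + 4)).toNat.choose 2 : ℤ) - (ℓ (k + 3)).toNat.choose 3 ≤ ℓ (k + 5) := by
      simpa using (hrec.bounds_of_growsAt (n := k + 4) fun m hm => hgrow m (by omega)).1
    have hnext : GrowsAt ℓ (k + 4) := mul_sub_one_le_three_mul_toNat (by omega) hstep hlower
    refine ⟨?_, fun m hm => ?_⟩
    · show 12 ≤ (ℓ (k + 4)).toNat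
      have hgrowth : (ℓ (k + 3)).toNat * ((ℓ (k + 3)).toNat - 1) ≤ 3 * (ℓ (k + 4)).toNat :=
        hstep
      have := Nat.mul_le_mul hbig (show 11 ≤ (ℓ (k + 3)).toNat - 1 by omega)
      omega
    · rcases (show m ≤ k + 3 ∨ m = k + 4 by omega) with hm | rfl
      exacts [hgrow m hm, hnext]

end SatisfiesEllRecursion

theorem ell_trapped (ℓ : ℕ → ℤ) (h0 : ℓ 0 = 3)
    (hrec : ∀ n : ℕ, ℓ (n + 1) =
      1 + ∑ j ∈ Finset.range (n + 1), (-1) ^ j * ((ℓ (n - j)).toNat.choose (j + 2) : ℤ)) (n : ℕ) :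
    1 + ((ℓ n).toNat.choose 2 : ℤ) -
        (if n = 0 then 0 else ((ℓ (n - 1)).toNat.choose 3 : ℤ)) ≤ ℓ (n + 1) ∧
      ℓ (n + 1) ≤ 1 + ((ℓ n).toNat.choose 2 : ℤ) :=
  SatisfiesEllRecursion.bounds_of_growsAt hrec fun m _ => SatisfiesEllRecursion.growsAt hrec h0 m
end
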